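/- In the Hotelling model on the circle, if x is an equilibrium of n ≥ 3 vendors, then every vendor's profit satisfies f_k(x) ≥ |Ī|/2 ≥ 1/(2n), where |Ī| is the maximum cyclic gap length between consecutive vendors. -/
import Mathlib

noncomputable section

/-- Shortest arc distance on the circle of circumference 1. -/
def circleDist (x y : ℝ) : ℝ := min |x - y + 1| (min |x - y| |x - y - 1|)

open scoped Classical

/-- The set of vendors nearest to the customer at `y`. -/
def nearest {n : ℕ} (ξ : Fin n → ℝ) (y : ℝ) : Finset (Fin n) :=
  Finset.univ.filter fun j => ∀ i, circleDist (ξ j) y ≤ circleDist (ξ i) y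

/-- Density of demand of customer `y` going to vendor `k`. -/
def rho {n : ℕ} (ξ : Fin n → ℝ) (k : Fin n) (y : ℝ) : ℝ :=
  if k ∈ nearest ξ y then (1 : ℝ) / (nearest ξ y).card else 0

/-- Profit of vendor `k`. -/
def profit {n : ℕ} (k : Fin n) (ξ : Fin n → ℝ) : ℝ :=
  ∫ y in (0:ℝ)..1, rho ξ k y

/-- Equilibrium: no vendor can strictly increase profit by unilateral relocation. -/
def IsEquilibrium {n : ℕ} (x : Fin n → ℝ) : Prop :=
  ∀ k : Fin n, ∀ x' ∈ Set.Icc (0:ℝ) 1,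
    profit k (Function.update x k x') ≤ profit k x

/-- Length of the cyclic gap `I_j = [x_j, x_{j+1}]` (for sorted `x` with `x 0 = 0`). -/
def gap {n : ℕ} [NeZero n] (x : Fin n → ℝ) (j : Fin n) : ℝ :=
  (if (j : ℕ) + 1 = n then 1 else 0) + x (j + 1) - x j

/-- The right endpoint of gap `I_j`, unwrapped to the real line. -/
def nextVal {n : ℕ} [NeZero n] (x : Fin n → ℝ) (j : Fin n) : ℝ :=
  (if (j : ℕ) + 1 = n then 1 else 0) + x (j + 1)

/-- Maximum cyclic gap length `|Ī|`. -/
def maxGap {n : ℕ} [NeZero n] (x : Fin n → ℝ) : ℝ := ⨆ j, gap x j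

/- ### Auxiliary lemmas -/

lemma circleDist_cont (c : ℝ) : Continuous (circleDist c) := by
  unfold circleDist; fun_prop

lemma nearest_meas {n : ℕ} (ξ : Fin n → ℝ) (s : Finset (Fin n)) :
    MeasurableSet {y : ℝ | nearest ξ y = s} := by
  have h1 : ∀ j : Fin n, MeasurableSet {y : ℝ | ∀ i, circleDist (ξ j) y ≤ circleDist (ξ i) y} := by
    intro j
    have : {y : ℝ | ∀ i, circleDist (ξ j) y ≤ circleDist (ξ i) y}
        = ⋂ i, {y : ℝ | circleDist (ξ j) y ≤ circleDist (ξ i) y} := by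
      ext y; simp
    rw [this]
    exact MeasurableSet.iInter fun i =>
      measurableSet_le (circleDist_cont (ξ j)).measurable (circleDist_cont (ξ i)).measurable
  have : {y : ℝ | nearest ξ y = s} =
      ⋂ j : Fin n, (if j ∈ s then {y : ℝ | ∀ i, circleDist (ξ j) y ≤ circleDist (ξ i) y}
        else {y : ℝ | ∀ i, circleDist (ξ j) y ≤ circleDist (ξ i) y}ᶜ) := by
    ext y
    simp only [Set.mem_iInter, Set.mem_setOf_eq]
    constructor
    · intro h j
      split_ifs with hj
      · have : j ∈ nearest ξ y := h ▸ hj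
        simpa [nearest] using this
      · intro hc
        exact hj (h ▸ (by simpa [nearest] using hc : j ∈ nearest ξ y))
    · intro h
      ext j
      have := h j
      by_cases hj : j ∈ s <;> simp [hj] at this <;> simp [nearest, hj, this]
  rw [this]
  apply MeasurableSet.iInter
  intro j
  split_ifs with hj
  · exact h1 j
  · exact (h1 j).compl

lemma rho_meas {n : ℕ} (ξ : Fin n → ℝ) (k : Fin n) : Measurable (rho ξ k) := by
  have : rho ξ k = fun y => ∑ s : Finset (Fin n),
      Set.indicator {y : ℝ | nearest ξ y = s}
        (fun _ => if k ∈ s then (1 : ℝ) / s.card else 0) y := by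
    funext y
    rw [Finset.sum_eq_single (nearest ξ y)]
    · simp [rho, Set.indicator]
    · intro s _ hs
      apply Set.indicator_of_notMem
      simpa using fun h => hs h.symm
    · simp
  rw [this]
  exact Finset.measurable_sum _ fun s _ => (measurable_const.indicator (nearest_meas ξ s))

lemma rho_nonneg {n : ℕ} (ξ : Fin n → ℝ) (k : Fin n) (y : ℝ) : 0 ≤ rho ξ k y := by
  unfold rho; split_ifs <;> positivity

lemma rho_le_one {n : ℕ} (ξ : Fin n → ℝ) (k : Fin n) (y : ℝ) : rho ξ k y ≤ 1 := by
  unfold rho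
  split_ifs with h
  · have hc : 0 < (nearest ξ y).card := Finset.card_pos.mpr ⟨k, h⟩
    rw [div_le_one (by exact_mod_cast hc)]
    exact_mod_cast hc
  · norm_num

lemma rho_intble {n : ℕ} (ξ : Fin n → ℝ) (k : Fin n) (a b : ℝ) :
    IntervalIntegrable (rho ξ k) MeasureTheory.volume a b := by
  apply IntervalIntegrable.mono_fun' (g := fun _ => (1:ℝ)) intervalIntegrable_const
    (rho_meas ξ k).aestronglyMeasurable
  filter_upwards with y
  rw [Real.norm_eq_abs, abs_of_nonneg (rho_nonneg ξ k y)]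
  exact rho_le_one ξ k y

lemma sum_gap {n : ℕ} [NeZero n] (x : Fin n → ℝ) : ∑ j, gap x j = 1 := by
  unfold gap
  rw [Finset.sum_sub_distrib, Finset.sum_add_distrib]
  have h1 : ∑ j : Fin n, x (j + 1) = ∑ j : Fin n, x j :=
    Fintype.sum_equiv (Equiv.addRight 1) _ _ (fun j => rfl)
  have h2 : ∑ j : Fin n, (if (j : ℕ) + 1 = n then (1:ℝ) else 0) = 1 := by
    have hpos := Nat.pos_of_ne_zero (NeZero.ne n)
    rw [Finset.sum_eq_single (⟨n - 1, Nat.sub_lt hpos one_pos⟩ : Fin n)]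
    · rw [if_pos]; simp only [Fin.val_mk]; omega
    · intro b _ hb
      rw [if_neg]
      intro hc
      apply hb
      ext
      simp only [Fin.val_mk]
      omega
    · simp
  rw [h1, h2]; ring

/-- Key arithmetic lemma: a customer in the small arc around `m` is strictly closer
to `m` than to any vendor separated from `m` by at least `g/2`. -/
lemma circleDist_key {g m t y : ℝ} (hg : 0 < g) (hm1 : g/2 ≤ m) (hm2 : m ≤ 1 - g/2)
    (ht0 : 0 ≤ t) (ht1 : t ≤ 1) (hsep : t ≤ m - g/2 ∨ m + g/2 ≤ t)
    (hy1 : m - g/4 < y) (hy2 : y < m + g/4) :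
    circleDist m y < circleDist t y := by
  have h1 : circleDist m y ≤ |m - y| := le_trans (min_le_right _ _) (min_le_left _ _)
  have h2 : |m - y| < g/4 := abs_lt.mpr ⟨by linarith, by linarith⟩
  have h3 : g/4 < circleDist t y := by
    unfold circleDist
    rw [lt_min_iff, lt_min_iff]
    have la := le_abs_self (t - y + 1)
    have lb := le_abs_self (t - y)
    have lc := neg_le_abs (t - y)
    have ld := neg_le_abs (t - y - 1)
    rcases hsep with h | h
    · exact ⟨by linarith, by linarith, by linarith⟩
    · exact ⟨by linarith, by linarith, by linarith⟩
  linarith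

lemma nearest_update {n : ℕ} (x : Fin n → ℝ) (k : Fin n) {g m y : ℝ}
    (hg : 0 < g) (hm1 : g/2 ≤ m) (hm2 : m ≤ 1 - g/2)
    (ht : ∀ i, 0 ≤ x i ∧ x i ≤ 1) (hsep : ∀ i, x i ≤ m - g/2 ∨ m + g/2 ≤ x i)
    (hy1 : m - g/4 < y) (hy2 : y < m + g/4) :
    nearest (Function.update x k m) y = {k} := by
  set ξ := Function.update x k m with hξ
  have hlt : ∀ i, i ≠ k → circleDist (ξ k) y < circleDist (ξ i) y := by
    intro i hik
    rw [hξ, Function.update_self, Function.update_of_ne hik]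
    exact circleDist_key hg hm1 hm2 (ht i).1 (ht i).2 (hsep i) hy1 hy2
  ext j
  simp only [nearest, Finset.mem_filter, Finset.mem_univ, true_and, Finset.mem_singleton]
  constructor
  · intro h
    by_contra hjk
    exact absurd (h k) (not_le.mpr (hlt j hjk))
  · intro h
    subst h
    intro i
    rcases eq_or_ne i j with rfl | hik
    · exact le_rfl
    · exact (hlt i hik).le

theorem equilibrium_profit_bound {n : ℕ} [NeZero n] (hn : 3 ≤ n)
    (x : Fin n → ℝ) (hx0 : x 0 = 0) (hmono : Monotone x) (hx1 : ∀ j, x j ≤ 1)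
    (heq : IsEquilibrium x) :
    ∀ k : Fin n, maxGap x / 2 ≤ profit k x ∧ 1 / (2 * (n : ℝ)) ≤ maxGap x / 2 := by
  intro k
  have hnpos : (0:ℝ) < n := by exact_mod_cast Nat.pos_of_ne_zero (NeZero.ne n)
  have hval1 : ((1 : Fin n) : ℕ) = 1 := by
    rw [Fin.val_one']; exact Nat.mod_eq_of_lt (by omega)
  have hxnn : ∀ i, 0 ≤ x i := fun i => hx0 ▸ hmono (Fin.zero_le i)
  -- gaps are nonnegative
  have hgapnn : ∀ j, 0 ≤ gap x j := by
    intro j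
    unfold gap
    split_ifs with h
    · have := hxnn (j + 1)
      linarith [hx1 j]
    · have hj1 : ((j + 1 : Fin n) : ℕ) = (j : ℕ) + 1 := by
        have := j.isLt
        simp only [Fin.add_def, hval1]
        exact Nat.mod_eq_of_lt (by omega)
      have : j ≤ j + 1 := by rw [Fin.le_def, hj1]; omega
      have := hmono this
      linarith
  have hsum := sum_gap x
  have hBdd : BddAbove (Set.range (gap x)) := Set.Finite.bddAbove (Set.finite_range _)
  have hle : ∀ j, gap x j ≤ maxGap x := fun j => le_ciSup hBdd j
  -- maximizer
  obtain ⟨l, -, hl⟩ := Finset.exists_max_image Finset.univ (gap x) ⟨0, Finset.mem_univ 0⟩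
  have hmax : maxGap x = gap x l :=
    le_antisymm (ciSup_le fun j => hl j (Finset.mem_univ j)) (hle l)
  -- 1/n ≤ maxGap
  have h1n : 1 ≤ (n : ℝ) * maxGap x := by
    calc (1:ℝ) = ∑ j, gap x j := hsum.symm
    _ ≤ ∑ _j : Fin n, maxGap x := Finset.sum_le_sum fun j _ => hle j
    _ = n * maxGap x := by rw [Finset.sum_const, Finset.card_univ, Fintype.card_fin,
        nsmul_eq_mul]
  have hsecond : 1 / (2 * (n : ℝ)) ≤ maxGap x / 2 := by
    rw [div_le_div_iff₀ (by positivity) (by norm_num)]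
    nlinarith
  refine ⟨?_, hsecond⟩
  obtain ⟨g, hgdef⟩ : ∃ g, maxGap x = g := ⟨_, rfl⟩
  rw [hgdef] at hle hmax h1n hsecond ⊢
  have hg0 : 0 < g := by nlinarith
  have hg1 : g ≤ 1 := by
    rw [hmax, ← hsum]
    exact Finset.single_le_sum (fun j _ => hgapnn j) (Finset.mem_univ l)
  -- the midpoint of the largest gap
  obtain ⟨m, hmdef⟩ : ∃ m, m = x l + g / 2 := ⟨_, rfl⟩
  have hgl : g = (if (l : ℕ) + 1 = n then (1:ℝ) else 0) + x (l + 1) - x l := hmax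
  have hm1 : g / 2 ≤ m := by have := hxnn l; linarith
  have hm2 : m ≤ 1 - g / 2 := by
    by_cases h : (l : ℕ) + 1 = n
    · rw [if_pos h] at hgl
      have hl10 : (l + 1 : Fin n) = 0 := by
        ext
        simp only [Fin.add_def, hval1, Fin.val_zero, h]
        exact Nat.mod_self n
      rw [hl10, hx0] at hgl
      rw [hmdef]
      linarith
    · rw [if_neg h] at hgl
      have := hx1 (l + 1)
      rw [hmdef]
      linarith
  have hsep : ∀ i, x i ≤ m - g/2 ∨ m + g/2 ≤ x i := by
    intro i
    have hmg : m - g/2 = x l := by rw [hmdef]; ring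
    by_cases h : (l : ℕ) + 1 = n
    · left
      rw [hmg]
      apply hmono
      rw [Fin.le_def]
      have := i.isLt
      omega
    · by_cases hi : i ≤ l
      · left; rw [hmg]; exact hmono hi
      · right
        rw [if_neg h] at hgl
        have hj1 : ((l + 1 : Fin n) : ℕ) = (l : ℕ) + 1 := by
          have := l.isLt
          simp only [Fin.add_def, hval1]
          exact Nat.mod_eq_of_lt (by omega)
        have hli : l + 1 ≤ i := by
          rw [Fin.le_def, hj1]
          rw [Fin.le_def, not_le] at hi
          omega
        have := hmono hli
        rw [hmdef]
        linarith
  -- apply equilibrium at the midpoint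
  have hmIcc : m ∈ Set.Icc (0:ℝ) 1 := ⟨by linarith, by linarith⟩
  have hkey := heq k m hmIcc
  -- lower bound the deviation profit
  set ξ := Function.update x k m with hξdef
  obtain ⟨a, hadef⟩ : ∃ a, a = m - g/4 := ⟨_, rfl⟩
  obtain ⟨b, hbdef⟩ : ∃ b, b = m + g/4 := ⟨_, rfl⟩
  have hab : a ≤ b := by rw [hadef, hbdef]; linarith
  have h0a : (0:ℝ) ≤ a := by rw [hadef]; linarith
  have hb1 : b ≤ 1 := by rw [hbdef]; linarith
  have hone : ∀ y ∈ Set.Ioo a b, rho ξ k y = 1 := by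
    intro y hy
    have hnear : nearest ξ y = {k} :=
      nearest_update x k hg0 hm1 hm2 (fun i => ⟨hxnn i, hx1 i⟩) hsep
        (hadef ▸ hy.1) (hbdef ▸ hy.2)
    simp [rho, hnear]
  have hmid : ∫ y in a..b, rho ξ k y = g / 2 := by
    have hae : ∀ᵐ y : ℝ, y ∈ Set.uIoc a b → rho ξ k y = 1 := by
      filter_upwards [MeasureTheory.compl_mem_ae_iff.mpr
        (MeasureTheory.measure_singleton b)] with y hy hmem
      rw [Set.uIoc_of_le hab] at hmem
      apply hone
      refine ⟨hmem.1, lt_of_le_of_ne hmem.2 ?_⟩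
      simpa using hy
    rw [intervalIntegral.integral_congr_ae hae]
    simp only [intervalIntegral.integral_const, smul_eq_mul, mul_one]
    rw [hbdef, hadef]; ring
  have hsplit : profit k ξ = (∫ y in (0:ℝ)..a, rho ξ k y) + (∫ y in a..b, rho ξ k y)
      + (∫ y in b..(1:ℝ), rho ξ k y) := by
    have e1 := intervalIntegral.integral_add_adjacent_intervals (rho_intble ξ k 0 a)
      (rho_intble ξ k a 1) (μ := MeasureTheory.volume)
    have e2 := intervalIntegral.integral_add_adjacent_intervals (rho_intble ξ k a b)
      (rho_intble ξ k b 1) (μ := MeasureTheory.volume)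
    unfold profit
    rw [← e1, ← e2]
    ring
  have hlow : g / 2 ≤ profit k ξ := by
    rw [hsplit, hmid]
    have h1 : 0 ≤ ∫ y in (0:ℝ)..a, rho ξ k y :=
      intervalIntegral.integral_nonneg h0a (fun u _ => rho_nonneg ξ k u)
    have h2 : 0 ≤ ∫ y in b..(1:ℝ), rho ξ k y :=
      intervalIntegral.integral_nonneg hb1 (fun u _ => rho_nonneg ξ k u)
    linarith
  exact hlow.trans hkey
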